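/- arXiv:1905.11604 — 3 statements merged into one kernel-verified Lean document; each statement's English description precedes it below -/
import Mathlib

section
/- Let n, d ∈ ℕ with n + 1 ≤ d, let p ∈ [0, 1/2] with pn an integer, let s ∈ {−1,+1}^n have exactly pn entries equal to −1, and set η := 1 − 2p. Let k : {1,…,n} → {2,…,d} be injective and let X ∈ ℝ^{n×d} have rows xⱼ := sⱼ e₁ + e_{k(j)}. For w₀ ∈ ℝ^d, define w' := Xᵀ(XXᵀ)⁻¹(𝟙 − Xw₀) + w₀, where 𝟙 ∈ ℝ^n is the all-ones vector. Then the first coordinate of w' satisfies w'(1) = (n/(n+1))·η − (sᵀXw₀)/(n+1) + w₀(1). -/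
open Matrix

/-- For the structured training set with rows `xⱼ = sⱼ e₁ + e_{k(j)}`
(`sⱼ ∈ {±1}`, exactly `pn` entries of `s` equal `−1` where `pn = p·n`, `k` injective into
`{2,…,d}`, `n + 1 ≤ d`), the interpolant `w' = Xᵀ (X Xᵀ)⁻¹ (𝟙 − X w₀) + w₀` has first
coordinate `w'(1) = (n/(n+1))·η − (sᵀ X w₀)/(n+1) + w₀(1)`, where `η = 1 − 2p`.
(Coordinates are 0-indexed: the "first coordinate" is index `0`.) -/
theorem stmt_6 {n d : ℕ} (hnd : n + 1 ≤ d) (p : ℝ) (hp0 : 0 ≤ p) (hp : p ≤ 1 / 2)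
    (pn : ℕ) (hpn : (pn : ℝ) = p * n)
    (s : Fin n → ℝ) (hs : ∀ j, s j = 1 ∨ s j = -1)
    (hcard : (Finset.univ.filter fun j => s j = -1).card = pn)
    (k : Fin n → Fin d) (hkinj : Function.Injective k) (hk1 : ∀ j, 1 ≤ (k j : ℕ))
    (X : Matrix (Fin n) (Fin d) ℝ)
    (hX : ∀ j, (X j : Fin d → ℝ) =
      s j • (Pi.single (⟨0, by omega⟩ : Fin d) 1 : Fin d → ℝ) +
        (Pi.single (k j) 1 : Fin d → ℝ))
    (w₀ : Fin d → ℝ) (η : ℝ) (hη : η = 1 - 2 * p) :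
    (Xᵀ *ᵥ ((X * Xᵀ)⁻¹ *ᵥ ((1 : Fin n → ℝ) - X *ᵥ w₀)) + w₀) ⟨0, by omega⟩ =
      ((n : ℝ) / ((n : ℝ) + 1)) * η - (s ⬝ᵥ (X *ᵥ w₀)) / ((n : ℝ) + 1) +
        w₀ ⟨0, by omega⟩ := by
  have hd0 : 0 < d := by omega
  set e0 : Fin d := ⟨0, by omega⟩ with he0
  have hk0 : ∀ j, k j ≠ e0 := by
    intro j h
    have := hk1 j
    rw [h] at this
    simp [he0] at this
  have hs2 : ∀ j, s j * s j = 1 := by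
    intro j; rcases hs j with h | h <;> simp [h]
  -- entries of X
  have hXe0 : ∀ j, X j e0 = s j := by
    intro j
    rw [hX j]
    simp [Pi.single_apply, (hk0 j).symm]
  have hd : ∀ (a b : Fin d), (Pi.single a (1:ℝ)) ⬝ᵥ (Pi.single b 1) = if a = b then 1 else 0 := by
    intro a b
    rw [dotProduct_single, mul_one, Pi.single_apply]
    simp [eq_comm]
  have hrow : ∀ i j, X i ⬝ᵥ X j = s i * s j + if i = j then 1 else 0 := by
    intro i j
    rw [hX i, hX j, dotProduct_add, add_dotProduct, add_dotProduct,
      dotProduct_smul, dotProduct_smul, smul_dotProduct]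
    simp only [hd, smul_dotProduct, dotProduct_smul, smul_eq_mul,
      if_neg (hk0 i), if_neg (Ne.symm (hk0 j)), hkinj.eq_iff]
    rcases eq_or_ne i j with h | h <;> simp [h] <;> ring
  have hss : s ⬝ᵥ s = (n : ℝ) := by
    simp only [dotProduct]
    rw [Finset.sum_congr rfl (fun j _ => hs2 j)]
    simp
  set M : Matrix (Fin n) (Fin n) ℝ := vecMulVec s s with hM
  have hA : X * Xᵀ = 1 + M := by
    ext i j
    have h0 : (X * Xᵀ) i j = X i ⬝ᵥ X j := rfl
    rw [h0, hrow i j, Matrix.add_apply, Matrix.one_apply, hM, vecMulVec_apply]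
    rcases eq_or_ne i j with h | h <;> simp [h] <;> ring
  have hMM : M * M = (n : ℝ) • M := by
    ext i j
    rw [Matrix.mul_apply, Matrix.smul_apply, hM]
    simp only [vecMulVec_apply]
    have : ∑ l, s i * s l * (s l * s j) = ∑ l, (s i * s j) * (s l * s l) := by
      apply Finset.sum_congr rfl; intro l _; ring
    rw [this, Finset.sum_congr rfl (fun l _ => by rw [hs2 l])]
    simp [mul_comm]
  have hn1 : ((n : ℝ) + 1) ≠ 0 := by positivity
  set c : ℝ := ((n : ℝ) + 1)⁻¹ with hc
  set B : Matrix (Fin n) (Fin n) ℝ := 1 - c • M with hB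
  have hAB : (X * Xᵀ) * B = 1 := by
    rw [hA, hB, add_mul, mul_sub, mul_sub, mul_one, mul_one, one_mul,
      Matrix.mul_smul, hMM]
    ext i j
    simp only [Matrix.sub_apply, Matrix.add_apply, Matrix.smul_apply, Matrix.one_apply,
      hM, vecMulVec_apply, smul_eq_mul, hc]
    rcases eq_or_ne i j with h | h <;> simp [h] <;> field_simp <;> ring
  have hinv : (X * Xᵀ)⁻¹ = B := Matrix.inv_eq_right_inv hAB
  set u : Fin n → ℝ := (1 : Fin n → ℝ) - X *ᵥ w₀ with hu
  have hlhs : (Xᵀ *ᵥ (B *ᵥ u)) e0 = s ⬝ᵥ (B *ᵥ u) := by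
    rw [Matrix.mulVec, dotProduct, dotProduct]
    apply Finset.sum_congr rfl
    intro j _
    rw [Matrix.transpose_apply, hXe0 j]
  have hMv : ∀ v : Fin n → ℝ, M *ᵥ v = (s ⬝ᵥ v) • s := by
    intro v
    ext i
    rw [Matrix.mulVec, dotProduct]
    simp only [hM, vecMulVec_apply, Pi.smul_apply, smul_eq_mul, dotProduct]
    rw [Finset.sum_mul]
    apply Finset.sum_congr rfl
    intro l _; ring
  have hsBv : ∀ v : Fin n → ℝ, s ⬝ᵥ (B *ᵥ v) = (s ⬝ᵥ v) * c := by
    intro v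
    rw [hB, Matrix.sub_mulVec, Matrix.smul_mulVec, hMv, dotProduct_sub,
      Matrix.one_mulVec, dotProduct_smul, dotProduct_smul, smul_eq_mul, smul_eq_mul,
      hss, hc]
    field_simp
    ring
  have hs1 : s ⬝ᵥ (1 : Fin n → ℝ) = (n : ℝ) - 2 * pn := by
    simp only [dotProduct, Pi.one_apply, mul_one]
    rw [← Finset.sum_filter_add_sum_filter_not Finset.univ (fun j => s j = -1)]
    have h1 : ∑ j ∈ Finset.univ.filter (fun j => s j = -1), s j
        = -(pn : ℝ) := by
      rw [Finset.sum_congr rfl (fun j hj => (Finset.mem_filter.mp hj).2)]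
      simp [hcard]
    have h2 : ∑ j ∈ Finset.univ.filter (fun j => ¬ s j = -1), s j
        = ((n : ℝ) - pn) := by
      rw [Finset.sum_congr rfl (fun j hj => by
        rcases hs j with h | h
        · exact h
        · exact absurd h (Finset.mem_filter.mp hj).2)]
      rw [Finset.sum_const, nsmul_eq_mul, mul_one]
      have := Finset.card_filter_add_card_filter_not
        (s := (Finset.univ : Finset (Fin n))) (p := fun j => s j = -1)
      have hcn : (Finset.univ.filter (fun j => ¬ s j = -1)).card = n - pn := by
        simp only [Finset.card_univ, Fintype.card_fin, hcard] at this
        omega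
      rw [hcn]
      have hpn_le : pn ≤ n := by
        have h5 := Finset.card_filter_le Finset.univ (fun j => s j = -1)
        simp only [Finset.card_univ, Fintype.card_fin, hcard] at h5
        exact h5
      push_cast [Nat.cast_sub hpn_le]
      ring
    rw [h1, h2]; ring
  have key : (Xᵀ *ᵥ ((X * Xᵀ)⁻¹ *ᵥ u)) e0
      = (((n : ℝ) - 2 * pn) - s ⬝ᵥ (X *ᵥ w₀)) * c := by
    rw [hinv, hlhs, hsBv, hu, dotProduct_sub, hs1]
  have hfin := key
  rw [Pi.add_apply]
  rw [hfin]
  rw [hpn, hη, hc]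
  field_simp
end

section
/- Let X ∈ ℝ^{n×d} with XXᵀ invertible, let w₀ ∈ ℝ^d, let 𝟙 ∈ ℝ^n be the all-ones vector, and define w' := Xᵀ(XXᵀ)⁻¹(𝟙 − Xw₀) + w₀. Let L(w) := (1/n) Σ_{j=1}^n (1 − ⟨w, xⱼ⟩)² and let (w_t) be the gradient descent iterates w_{t+1} := w_t − α ∇L(w_t) from w₀. If the step size satisfies 0 < α < n / λ_max(XXᵀ), where λ_max(XXᵀ) is the largest eigenvalue of XXᵀ, then w_t → w' as t → ∞. -/
/-!
With `A = X Xᵀ` and `c = 2α/n`, the point `w'` solves `X w' = 𝟙` and `w₀ - w'` lies in the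
range of `Xᵀ`, so the iterates are `w_t = Xᵀ (1 - c A)ᵗ v + w'` for a fixed `v`. Since `A` is
positive definite, its eigenvectors diagonalise `1 - c A` with eigenvalues `1 - c λᵢ`, and the
step-size bound `c λ_max < 2` puts all of them in `(-1, 1)`; hence `(1 - c A)ᵗ v → 0`.
-/

open Matrix Filter Topology

theorem Module.End.tendsto_pow_apply_nhds_zero_of_hasEigenvector_basis
    {ι 𝕜 E : Type*} [Fintype ι] [NormedField 𝕜] [AddCommGroup E] [Module 𝕜 E]
    [TopologicalSpace E] [IsTopologicalAddGroup E] [ContinuousSMul 𝕜 E]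
    {f : Module.End 𝕜 E} (b : Module.Basis ι 𝕜 E) {μ : ι → 𝕜}
    (hb : ∀ i, f.HasEigenvector (μ i) (b i)) (hμ : ∀ i, ‖μ i‖ < 1) (v : E) :
    Tendsto (fun t : ℕ => (f ^ t) v) atTop (𝓝 0) := by
  have hpow : ∀ t : ℕ, (f ^ t) v = ∑ i, (b.repr v i * μ i ^ t) • b i := fun t => by
    conv_lhs => rw [← b.sum_repr v]
    simp only [map_sum, map_smul, (hb _).pow_apply, smul_smul, mul_comm]
  simp only [hpow]
  simpa using tendsto_finsetSum Finset.univ fun i _ =>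
    ((tendsto_pow_atTop_nhds_zero_of_norm_lt_one (hμ i)).const_mul (b.repr v i)).smul_const (b i)

theorem Matrix.leastSquares_descent_eq {m n R : Type*} [Fintype m] [Fintype n] [DecidableEq m]
    [CommRing R] {X : Matrix m n R} {b : m → R} {c : R} {w : ℕ → n → R} {w' : n → R}
    {v : m → R} (hw' : X *ᵥ w' = b) (hw0 : w 0 = Xᵀ *ᵥ v + w')
    (hstep : ∀ t, w (t + 1) = w t - c • (Xᵀ *ᵥ (X *ᵥ w t - b))) (t : ℕ) :
    w t = Xᵀ *ᵥ ((1 - c • (X * Xᵀ)) ^ t *ᵥ v) + w' := by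
  induction t with
  | zero => simpa using hw0
  | succ t ih =>
    rw [hstep, ih, mulVec_add, hw', add_sub_cancel_right, pow_succ', ← mulVec_mulVec _ (1 - _),
      sub_mulVec, one_mulVec, smul_mulVec, mulVec_sub, mulVec_smul, mulVec_mulVec _ X]
    abel

section Spectral

variable {n : Type*} [Fintype n] [DecidableEq n] {A : Matrix n n ℝ}

theorem Matrix.IsHermitian.tendsto_pow_one_sub_smul_mulVec_nhds_zero (hA : A.IsHermitian)
    {c : ℝ} (hc : ∀ i, |1 - c * hA.eigenvalues i| < 1) (v : n → ℝ) :
    Tendsto (fun t : ℕ => (1 - c • A) ^ t *ᵥ v) atTop (𝓝 0) := by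
  let b := hA.eigenvectorBasis.toBasis.map (WithLp.linearEquiv 2 ℝ (n → ℝ))
  have hb : ∀ i,
      Module.End.HasEigenvector (toLin' (1 - c • A)) (1 - c * hA.eigenvalues i) (b i) :=
    fun i => Module.End.hasEigenvector_iff.2 ⟨Module.End.mem_eigenspace_iff.2 (by
      simp [b, hA.mulVec_eigenvectorBasis, sub_smul, smul_smul]), b.ne_zero i⟩
  have := Module.End.tendsto_pow_apply_nhds_zero_of_hasEigenvector_basis b hb hc v
  simp only [← toLin'_pow, toLin'_apply] at this
  exact this

theorem Matrix.IsHermitian.eigenvalues_le_sSup_spectrum (hA : A.IsHermitian) (i : n) :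
    hA.eigenvalues i ≤ sSup (spectrum ℝ A) := by
  rw [hA.spectrum_real_eq_range_eigenvalues]
  exact le_csSup (Set.finite_range _).bddAbove ⟨i, rfl⟩

theorem Matrix.PosDef.abs_one_sub_mul_eigenvalues_lt_one (hA : A.PosDef) {c : ℝ} (hc : 0 < c)
    (hcA : c * sSup (spectrum ℝ A) < 2) (i : n) : |1 - c * hA.1.eigenvalues i| < 1 := by
  have hle := mul_le_mul_of_nonneg_left (hA.1.eigenvalues_le_sSup_spectrum i) hc.le
  have hpos := mul_pos hc (hA.eigenvalues_pos i)
  rw [abs_lt]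
  constructor <;> linarith

end Spectral

/-- For gradient descent on the empirical square loss
`L(w) = (1/n) Σⱼ (1 − ⟨w, xⱼ⟩)²` (with `∇L(w) = (2/n) Xᵀ (X w − 𝟙)`), if `X Xᵀ` is
invertible and the step size satisfies `0 < α < n / λ_max(X Xᵀ)` (where `λ_max` is the
largest element of the spectrum of `X Xᵀ`), then the iterates started at `w₀` converge to
`w' = Xᵀ (X Xᵀ)⁻¹ (𝟙 − X w₀) + w₀`. -/
theorem stmt_9 {n d : ℕ} (X : Matrix (Fin n) (Fin d) ℝ) (hX : IsUnit (X * Xᵀ))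
    (w₀ : Fin d → ℝ) (α : ℝ) (hα : 0 < α)
    (hα2 : α < (n : ℝ) / sSup (spectrum ℝ (X * Xᵀ)))
    (w : ℕ → Fin d → ℝ) (hw0 : w 0 = w₀)
    (hGD : ∀ t, w (t + 1) =
      w t - α • (((2 : ℝ) / n) • (Xᵀ *ᵥ (X *ᵥ w t - 1)))) :
    Tendsto w atTop
      (nhds (Xᵀ *ᵥ ((X * Xᵀ)⁻¹ *ᵥ ((1 : Fin n → ℝ) - X *ᵥ w₀)) + w₀)) := by
  set A := X * Xᵀ
  set u := A⁻¹ *ᵥ (1 - X *ᵥ w₀)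
  have hPSD : A.PosSemidef := by simpa using posSemidef_self_mul_conjTranspose X
  have hA : A.PosDef := hPSD.posDef_iff_isUnit.2 hX
  have hu : A *ᵥ u = 1 - X *ᵥ w₀ := by
    rw [mulVec_mulVec, mul_nonsing_inv _ ((isUnit_iff_isUnit_det A).1 hX), one_mulVec]
  have hw' : X *ᵥ (Xᵀ *ᵥ u + w₀) = 1 := by rw [mulVec_add, mulVec_mulVec, hu, sub_add_cancel]
  have hcontract : ∀ i, |1 - α * (2 / n) * hA.1.eigenvalues i| < 1 := fun i => by
    have hn : (0 : ℝ) < n := by exact_mod_cast i.pos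
    have hS := (hA.eigenvalues_pos i).trans_le (hA.1.eigenvalues_le_sSup_spectrum i)
    refine hA.abs_one_sub_mul_eigenvalues_lt_one (by positivity) ?_ i
    rw [lt_div_iff₀ hS] at hα2
    calc α * (2 / n) * sSup (spectrum ℝ A) = 2 * (α * sSup (spectrum ℝ A)) / n := by ring
      _ < 2 * n / n := by gcongr
      _ = 2 := by field_simp
  have hclosed := leastSquares_descent_eq (w := w) (v := -u) hw'
    (by rw [hw0, mulVec_neg]; abel) (fun t => by rw [hGD, smul_smul])
  have hcont : Continuous fun r : Fin n → ℝ => Xᵀ *ᵥ r + (Xᵀ *ᵥ u + w₀) :=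
    (continuous_const.matrix_mulVec continuous_id).add continuous_const
  rw [funext hclosed]
  simpa only [Function.comp_def, mulVec_zero, zero_add] using
    (hcont.tendsto 0).comp (hA.1.tendsto_pow_one_sub_smul_mulVec_nhds_zero hcontract (-u))
end

section
/- Fix p ∈ [0, 1/2], n, d ∈ ℕ with n + 1 ≤ d, let s ∈ {−1,+1}^n, let k : {1,…,n} → {2,…,d} be injective, and let X ∈ ℝ^{n×d} have rows xⱼ := sⱼ e₁ + e_{k(j)}. Then there exists w ∈ ℝ^d with ⟨w, xⱼ⟩ = 1 for every j ∈ {1,…,n} (so w is an empirical risk minimizer fitting the training set exactly with zero square loss), yet P_{(x,y)∼D}[sign⟨w, x⟩ = y] ≤ p + n/(d−1); in particular, its population accuracy is at most 1/2 + n/(d−1). -/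
open Matrix MeasureTheory
open scoped ENNReal

noncomputable section

/-- The sign `±1 : ℝ` of a Boolean. -/
def sgnB (b : Bool) : ℝ := if b then 1 else -1

/-- The data vector `x = η·y·e₁ + e_k ∈ ℝ^d`, where the coordinate `k ∈ {2,…,d}` is
represented (0-indexed) by an element of `Fin (d−1)`: `e₁` is coordinate `0` and `e_k`
is coordinate `k + 1`. -/
def dataX (d : ℕ) (y η : Bool) (k : Fin (d - 1)) : Fin d → ℝ := fun i =>
  (if (i : ℕ) = 0 then sgnB η * sgnB y else 0) +
    (if (i : ℕ) = (k : ℕ) + 1 then 1 else 0)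

/-- The joint distribution of the latent variables `(y, k, η)` of a single sample from
`D`: `y` uniform on `{−1,+1}`, `k` uniform on `{2,…,d}`, and `η = +1` with probability
`1 − p`, all independent (Booleans encode `true ↦ +1`, `false ↦ −1`). -/
def paramPMF (p : ℝ) (hp : 0 ≤ p) (d : ℕ) (hd : 2 ≤ d) :
    PMF (Bool × Fin (d - 1) × Bool) :=
  haveI : Nonempty (Fin (d - 1)) := ⟨⟨0, by omega⟩⟩
  (PMF.uniformOfFintype Bool).bind fun y =>
    (PMF.uniformOfFintype (Fin (d - 1))).bind fun k =>
      (PMF.bernoulli (Real.toNNReal (1 - p))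
        (by rw [Real.toNNReal_le_one]; linarith)).map fun η => (y, k, η)

/-- The data distribution `D` on `ℝ^d × {−1,+1} ⊆ ℝ^d × ℝ`:
the law of `(x, y) = (η·y·e₁ + e_k, y)`. -/
def popD (p : ℝ) (hp : 0 ≤ p) (d : ℕ) (hd : 2 ≤ d) : Measure ((Fin d → ℝ) × ℝ) :=
  ((paramPMF p hp d hd).map fun t => (dataX d t.1 t.2.2 t.2.1, sgnB t.1)).toMeasure

/-- The population accuracy `P_{(x,y)∼D}[sign⟨w, x⟩ = y]` of the linear classifier
`x ↦ sign⟨w, x⟩`, where `sign t = +1` if `t > 0` and `−1` otherwise. -/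
def popAcc (p : ℝ) (hp : 0 ≤ p) (d : ℕ) (hd : 2 ≤ d) (w : Fin d → ℝ) : ℝ≥0∞ :=
  popD p hp d hd {q | (if 0 < w ⬝ᵥ q.1 then (1 : ℝ) else -1) = q.2}

end

/-!
The interpolating classifier is `w = -e₁ + ∑ⱼ (1 + sⱼ) e_{k(j)}`: on a training row,
`⟨w, xⱼ⟩ = -sⱼ + (1 + sⱼ) = 1`. A fresh sample `x = η y e₁ + e_k` whose coordinate `k` is
not one of the `n` training coordinates has `⟨w, x⟩ = -η y`, so `w` misclassifies it unless
`η = -1`. Hence `w` is correct only on the event `η = -1` (probability `p`) or on the event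
that `k` hits a training coordinate (probability at most `n/(d-1)`).
-/

lemma dataX_eq_smul_single_add_single {d : ℕ} (hd : 2 ≤ d) (y η : Bool) (κ : Fin (d - 1)) :
    dataX d y η κ = (sgnB η * sgnB y) • Pi.single ⟨0, zero_lt_two.trans_le hd⟩ 1 +
      Pi.single ⟨κ + 1, Nat.add_lt_of_lt_sub κ.isLt⟩ 1 := by
  ext i
  simp [dataX, Pi.single_apply, Fin.ext_iff]

lemma dotProduct_dataX {d : ℕ} (hd : 2 ≤ d) (w : Fin d → ℝ) (y η : Bool) (κ : Fin (d - 1)) :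
    w ⬝ᵥ dataX d y η κ =
      sgnB η * sgnB y * w ⟨0, zero_lt_two.trans_le hd⟩ +
        w ⟨κ + 1, Nat.add_lt_of_lt_sub κ.isLt⟩ := by
  rw [dataX_eq_smul_single_add_single hd, dotProduct_add, dotProduct_smul, dotProduct_single,
    dotProduct_single, mul_one, mul_one, smul_eq_mul]

lemma sign_neg_sgnB_ne (y : Bool) : (if 0 < -sgnB y then (1 : ℝ) else -1) ≠ sgnB y := by
  cases y <;> norm_num [sgnB]

section Marginals

variable {p : ℝ} {hp : 0 ≤ p} {d : ℕ} {hd : 2 ≤ d}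

lemma paramPMF_toMeasure_noise_false (hp1 : p ≤ 1) :
    (paramPMF p hp d hd).toMeasure {t | t.2.2 = false} = ENNReal.ofReal p := by
  rw [PMF.toMeasure_apply_eq_toOuterMeasure, ← Set.preimage_ofPred_eq (p := (· = false)),
    ← PMF.toOuterMeasure_map_apply]
  simp only [paramPMF, PMF.map_bind, PMF.map_comp, Function.comp_def, PMF.bind_const]
  rw [show (fun η : Bool => η) = id from rfl, PMF.map_id, Set.ofPred_eq_eq_singleton,
    PMF.toOuterMeasure_apply_singleton]
  change ((1 - (1 - p).toNNReal : NNReal) : ℝ≥0∞) = ENNReal.ofReal p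
  rw [ENNReal.coe_sub, ENNReal.coe_one]
  change 1 - ENNReal.ofReal (1 - p) = ENNReal.ofReal p
  rw [ENNReal.ofReal_sub _ hp, ENNReal.ofReal_one,
    ENNReal.sub_sub_cancel ENNReal.one_ne_top (ENNReal.ofReal_le_one.2 hp1)]

lemma paramPMF_toMeasure_coord_mem (K : Finset (Fin (d - 1))) :
    (paramPMF p hp d hd).toMeasure {t | t.2.1 ∈ K} =
      ENNReal.ofReal (K.card / ((d : ℝ) - 1)) := by
  have : Nonempty (Fin (d - 1)) := ⟨⟨0, by omega⟩⟩
  have hconst (a : Fin (d - 1)) (q : PMF Bool) : q.map (fun _ => a) = PMF.pure a :=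
    q.map_const a
  rw [PMF.toMeasure_apply_eq_toOuterMeasure, ← Set.preimage_ofPred_eq (p := (· ∈ K)),
    ← PMF.toOuterMeasure_map_apply]
  simp only [paramPMF, PMF.map_bind, PMF.map_comp, Function.comp_def, PMF.bind_const, hconst,
    PMF.bind_pure]
  rw [PMF.toOuterMeasure_uniformOfFintype_apply, ← Nat.cast_pred (by omega),
    ENNReal.ofReal_div_of_pos (by simp; omega)]
  simp

end Marginals

lemma popAcc_le_of_apply_succ_eq_zero {p : ℝ} (hp : 0 ≤ p) (hp1 : p ≤ 1) {d : ℕ} (hd : 2 ≤ d)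
    {w : Fin d → ℝ} (hw0 : w ⟨0, zero_lt_two.trans_le hd⟩ = -1) (K : Finset (Fin (d - 1)))
    (hwK : ∀ κ ∉ K, w ⟨κ + 1, Nat.add_lt_of_lt_sub κ.isLt⟩ = 0) :
    popAcc p hp d hd w ≤ ENNReal.ofReal (p + K.card / ((d : ℝ) - 1)) := by
  set μ := (paramPMF p hp d hd).toMeasure
  have hwrong : (fun t : Bool × Fin (d - 1) × Bool => (dataX d t.1 t.2.2 t.2.1, sgnB t.1)) ⁻¹'
      {q | (if 0 < w ⬝ᵥ q.1 then (1 : ℝ) else -1) = q.2} ⊆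
      {t | t.2.2 = false} ∪ {t | t.2.1 ∈ K} := by
    rintro ⟨y, κ, η⟩ hcorrect
    by_contra! hmiss
    simp only [Set.mem_union, Set.mem_ofPred_eq, Bool.not_eq_false, not_or] at hmiss
    obtain ⟨rfl, hκ⟩ := hmiss
    refine sign_neg_sgnB_ne y ?_
    simpa [dotProduct_dataX hd, hw0, hwK κ hκ, sgnB] using hcorrect
  calc popAcc p hp d hd w
      = μ ((fun t => (dataX d t.1 t.2.2 t.2.1, sgnB t.1)) ⁻¹'
          {q | (if 0 < w ⬝ᵥ q.1 then (1 : ℝ) else -1) = q.2}) := by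
        rw [popAcc, popD, PMF.toMeasure_apply_eq_toOuterMeasure, PMF.toOuterMeasure_map_apply,
          ← PMF.toMeasure_apply_eq_toOuterMeasure]
    _ ≤ μ {t | t.2.2 = false} + μ {t | t.2.1 ∈ K} :=
        (measure_mono hwrong).trans (measure_union_le _ _)
    _ = ENNReal.ofReal (p + K.card / ((d : ℝ) - 1)) := by
        rw [paramPMF_toMeasure_noise_false hp1, paramPMF_toMeasure_coord_mem,
          ENNReal.ofReal_add hp (div_nonneg (Nat.cast_nonneg _) (by simp; omega))]

lemma card_filter_succ_mem_range_le {n d : ℕ} (k : Fin n → Fin d) :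
    (Finset.univ.filter fun κ : Fin (d - 1) => ∃ j, (k j : ℕ) = κ + 1).card ≤ n := by
  calc _ ≤ (Finset.univ.image k).card := by
        refine Finset.card_le_card_of_injOn (fun κ => ⟨κ + 1, Nat.add_lt_of_lt_sub κ.isLt⟩) ?_ ?_
        · intro κ hκ
          obtain ⟨j, hj⟩ := (Finset.mem_filter.1 hκ).2
          exact Finset.mem_image.2 ⟨j, Finset.mem_univ _, Fin.ext hj⟩
        · intro a _ b _ hab
          simpa [Fin.ext_iff] using hab
    _ ≤ n := Finset.card_image_le.trans (by simp)

section Interpolator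

variable {n d : ℕ} (k : Fin n → Fin d) (s : Fin n → ℝ) (e₀ : Fin d)

noncomputable def interpolator : Fin d → ℝ :=
  Function.update (Function.extend k (fun j => 1 + s j) 0) e₀ (-1)

lemma interpolator_self : interpolator k s e₀ e₀ = -1 :=
  Function.update_self ..

lemma interpolator_apply_of_notMem_range {i : Fin d} (hi : i ∉ Set.range k) (hi₀ : i ≠ e₀) :
    interpolator k s e₀ i = 0 := by
  rw [interpolator, Function.update_of_ne hi₀, Function.extend_apply' _ _ _ hi]
  rfl

variable {k e₀}

lemma interpolator_apply (hk : Function.Injective k) (hk₀ : ∀ j, k j ≠ e₀) (j : Fin n) :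
    interpolator k s e₀ (k j) = 1 + s j := by
  rw [interpolator, Function.update_of_ne (hk₀ j), hk.extend_apply]

lemma interpolator_dotProduct (hk : Function.Injective k) (hk₀ : ∀ j, k j ≠ e₀) (j : Fin n) :
    interpolator k s e₀ ⬝ᵥ (s j • Pi.single e₀ 1 + Pi.single (k j) 1) = 1 := by
  rw [dotProduct_add, dotProduct_smul, dotProduct_single, dotProduct_single, interpolator_self,
    interpolator_apply s hk hk₀, smul_eq_mul]
  ring

end Interpolator

/-- poor ERMs exist. For `p ∈ [0, 1/2]`, `n + 1 ≤ d`, `d ≥ 2`, and the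
structured training set with rows `xⱼ = sⱼ e₁ + e_{k(j)}` (`sⱼ ∈ {±1}`, `k` injective into
`{2,…,d}`), there is a `w ∈ ℝ^d` with `⟨w, xⱼ⟩ = 1` for every `j` (an empirical risk
minimizer with zero square loss), yet with population accuracy
`P_{(x,y)∼D}[sign⟨w,x⟩ = y] ≤ p + n/(d−1) ≤ 1/2 + n/(d−1)`. -/
theorem stmt_12 {n d : ℕ} (hd : 2 ≤ d)
    (p : ℝ) (hp0 : 0 ≤ p) (hp : p ≤ 1 / 2)
    (s : Fin n → ℝ)
    (k : Fin n → Fin d) (hkinj : Function.Injective k) (hk1 : ∀ j, 1 ≤ (k j : ℕ))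
    (X : Matrix (Fin n) (Fin d) ℝ)
    (hX : ∀ j, (X j : Fin d → ℝ) =
      s j • (Pi.single (⟨0, by omega⟩ : Fin d) 1 : Fin d → ℝ) +
        (Pi.single (k j) 1 : Fin d → ℝ)) :
    ∃ w : Fin d → ℝ,
      (∀ j, w ⬝ᵥ (X j : Fin d → ℝ) = 1) ∧
      popAcc p hp0 d hd w ≤ ENNReal.ofReal (p + (n : ℝ) / ((d : ℝ) - 1)) ∧
      popAcc p hp0 d hd w ≤ ENNReal.ofReal (1 / 2 + (n : ℝ) / ((d : ℝ) - 1)) := by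
  let e₀ : Fin d := ⟨0, by omega⟩
  have hk₀ (j : Fin n) : k j ≠ e₀ := fun h => by simpa [e₀, h] using hk1 j
  let K := Finset.univ.filter fun κ : Fin (d - 1) => ∃ j, (k j : ℕ) = κ + 1
  have hvanish : ∀ κ ∉ K, interpolator k s e₀ ⟨κ + 1, Nat.add_lt_of_lt_sub κ.isLt⟩ = 0 :=
    fun κ hκ => interpolator_apply_of_notMem_range k s e₀
      (by simpa [K, Fin.ext_iff] using hκ) (by simp [e₀, Fin.ext_iff])
  have hK : (K.card : ℝ) ≤ n := by exact_mod_cast card_filter_succ_mem_range_le k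
  have hd₁ : (0 : ℝ) ≤ d - 1 := by
    rw [sub_nonneg, Nat.one_le_cast]
    omega
  have hacc : popAcc p hp0 d hd (interpolator k s e₀) ≤ ENNReal.ofReal (p + n / ((d : ℝ) - 1)) :=
    (popAcc_le_of_apply_succ_eq_zero hp0 (by linarith) hd (interpolator_self k s e₀) K
      hvanish).trans (ENNReal.ofReal_le_ofReal (by gcongr))
  refine ⟨interpolator k s e₀, fun j => ?_, hacc,
    hacc.trans (ENNReal.ofReal_le_ofReal (by linarith))⟩
  rw [hX j]
  exact interpolator_dotProduct s hkinj hk₀ j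
end
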